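/- arXiv:math/0304214 — 4 statements merged into one kernel-verified Lean document; each statement's English description precedes it below -/
import Mathlib

section
/- The complementary error function erfc(x) := (2/√π) ∫_x^∞ e^{-ξ²} dξ satisfies erfc(x) ≤ (2/√π) · e^{-x²} / (x + √(x² + 4/π)) ≤ e^{-x²} for all x ≥ 0. -/
/-!
Put `w(x) = x + √(x² + c)` and `G(x) = ∫_x^∞ e^{-t²} dt - e^{-x²}/w(x)`. Since
`w² - 2xw = c`, the derivative collapses to `G'(x) = e^{-x²}/w² · (x/√(x² + c) + 1 - c)`, whose
second factor is increasing. So once `G'` turns positive it stays nonnegative, and `G`, which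
starts at `G(0) = √π/2 - 1/√c ≤ 0` for `c ≤ 4/π` and tends to `0` at infinity, can never become
positive: it would have to climb above `0` and then could not come back.
-/

/-- The complementary error function `erfc x = (2/√π) ∫_x^∞ e^{-ξ²} dξ`. -/
noncomputable def erfc (x : ℝ) : ℝ :=
  (2 / Real.sqrt Real.pi) * ∫ ξ in Set.Ioi x, Real.exp (-ξ ^ 2)

open MeasureTheory Set Filter Topology Real

theorem hasDerivAt_integral_Ioi {f : ℝ → ℝ} {x : ℝ} (hf : Integrable f) (hfx : ContinuousAt f x) :
    HasDerivAt (fun y ↦ ∫ t in Ioi y, f t) (-f x) x := by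
  have htail : (fun y ↦ ∫ t in Ioi y, f t) = fun y ↦ (∫ t in Ioi 0, f t) - ∫ t in (0 : ℝ)..y, f t :=
    funext fun y ↦ by
      rw [← intervalIntegral.integral_Ioi_sub_Ioi' hf.integrableOn hf.integrableOn, sub_sub_cancel]
  rw [htail]
  exact (intervalIntegral.integral_hasDerivAt_right hf.intervalIntegrable
    hf.aestronglyMeasurable.stronglyMeasurableAtFilter hfx).const_sub _

theorem nonpos_of_hasDerivAt_of_monotoneOn {G p φ : ℝ → ℝ} {a l x : ℝ}
    (hG : ∀ y, HasDerivAt G (p y * φ y) y) (hp : ∀ y, 0 < p y) (hφ : MonotoneOn φ (Ici a))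
    (ha : G a ≤ 0) (hlim : Tendsto G atTop (𝓝 l)) (hl : l ≤ 0) (hx : a ≤ x) : G x ≤ 0 := by
  by_contra! hGx
  have hax : a < x := hx.lt_of_ne (by rintro rfl; linarith)
  obtain ⟨y, ⟨hay, hyx⟩, hslope⟩ := exists_hasDerivAt_eq_slope G (fun y ↦ p y * φ y) hax
    (fun y _ ↦ (hG y).continuousAt.continuousWithinAt) (fun y _ ↦ hG y)
  have hφy : 0 < φ y :=
    pos_of_mul_pos_right (hslope ▸ div_pos (by linarith) (by linarith)) (hp y).le
  have hmono : MonotoneOn G (Ici x) := by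
    refine monotoneOn_of_hasDerivWithinAt_nonneg (convex_Ici x)
      (fun z _ ↦ (hG z).continuousAt.continuousWithinAt) (fun z _ ↦ (hG z).hasDerivWithinAt)
      fun z hz ↦ ?_
    rw [interior_Ici, mem_Ioi] at hz
    exact mul_nonneg (hp z).le (hφy.le.trans (hφ hay.le (mem_Ici.2 (by linarith)) (by linarith)))
  have : G x ≤ l := ge_of_tendsto hlim (by
    filter_upwards [eventually_ge_atTop x] with z hz using hmono self_mem_Ici hz hz)
  linarith

theorem monotoneOn_div_sqrt_sq_add {c : ℝ} (hc : 0 < c) :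
    MonotoneOn (fun x ↦ x / √(x ^ 2 + c)) (Ici 0) := by
  intro y (hy : 0 ≤ y) z (hz : 0 ≤ z) hyz
  rw [div_le_div_iff₀ (by positivity) (by positivity),
    ← pow_le_pow_iff_left₀ (by positivity) (by positivity) two_ne_zero, mul_pow, mul_pow,
    sq_sqrt (by positivity), sq_sqrt (by positivity)]
  nlinarith [mul_le_mul hyz hyz hy hz]

noncomputable def gaussTailBound (c x : ℝ) : ℝ := exp (-x ^ 2) / (x + √(x ^ 2 + c))

theorem add_sqrt_sq_add_pos {c : ℝ} (hc : 0 < c) (x : ℝ) : 0 < x + √(x ^ 2 + c) := by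
  have : |x| < √(x ^ 2 + c) := by
    rw [← sqrt_sq_eq_abs]; exact sqrt_lt_sqrt (sq_nonneg x) (by linarith)
  linarith [neg_abs_le x]

theorem hasDerivAt_gaussTailBound {c : ℝ} (hc : 0 < c) (x : ℝ) :
    HasDerivAt (gaussTailBound c) (-exp (-x ^ 2) -
      exp (-x ^ 2) / (x + √(x ^ 2 + c)) ^ 2 * (x / √(x ^ 2 + c) + 1 - c)) x := by
  have hss : √(x ^ 2 + c) ^ 2 = x ^ 2 + c := sq_sqrt (by positivity)
  have hw := add_sqrt_sq_add_pos hc x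
  have hexp : HasDerivAt (fun y ↦ exp (-y ^ 2)) (-(2 * x) * exp (-x ^ 2)) x := by
    simpa [mul_comm] using ((hasDerivAt_pow 2 x).neg).exp
  have hden : HasDerivAt (fun y ↦ y + √(y ^ 2 + c)) (1 + 2 * x / (2 * √(x ^ 2 + c))) x := by
    refine (hasDerivAt_id x).add ?_
    simpa using ((hasDerivAt_pow 2 x).add_const c).sqrt (by positivity)
  refine (hexp.div hden hw.ne').congr_deriv ?_
  field_simp
  linear_combination (√(x ^ 2 + c)) * hss

theorem tendsto_gaussTailBound_atTop (c : ℝ) : Tendsto (gaussTailBound c) atTop (𝓝 0) := by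
  have hexp : Tendsto (fun x : ℝ ↦ exp (-x ^ 2)) atTop (𝓝 0) :=
    tendsto_exp_atBot.comp (tendsto_neg_atTop_atBot.comp (tendsto_pow_atTop two_ne_zero))
  exact hexp.div_atTop (tendsto_id.atTop_add_nonneg fun x ↦ sqrt_nonneg _)

theorem gaussTailBound_le {c x : ℝ} (hc : 0 < c) (hx : 0 ≤ x) :
    gaussTailBound c x ≤ exp (-x ^ 2) / √c := by
  unfold gaussTailBound
  gcongr
  linarith [sqrt_le_sqrt (le_add_of_nonneg_left (sq_nonneg x) : c ≤ x ^ 2 + c)]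

theorem sqrt_four_div_pi : √(4 / π) = 2 / √π := by
  rw [sqrt_div' _ pi_pos.le, show (4 : ℝ) = 2 ^ 2 by norm_num, sqrt_sq zero_le_two]

theorem integral_Ioi_exp_neg_sq_le_gaussTailBound {c x : ℝ} (hc : 0 < c) (hcπ : c ≤ 4 / π)
    (hx : 0 ≤ x) : ∫ t in Ioi x, exp (-t ^ 2) ≤ gaussTailBound c x := by
  have hint : Integrable fun t : ℝ ↦ exp (-t ^ 2) := by
    simpa using integrable_exp_neg_mul_sq one_pos
  have hderiv (y : ℝ) : HasDerivAt (fun x ↦ (∫ t in Ioi x, exp (-t ^ 2)) - gaussTailBound c x)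
      (exp (-y ^ 2) / (y + √(y ^ 2 + c)) ^ 2 * (y / √(y ^ 2 + c) + 1 - c)) y :=
    ((hasDerivAt_integral_Ioi hint (by fun_prop)).sub (hasDerivAt_gaussTailBound hc y)).congr_deriv
      (by ring)
  have hpos (y : ℝ) : 0 < exp (-y ^ 2) / (y + √(y ^ 2 + c)) ^ 2 := by
    have := add_sqrt_sq_add_pos hc y
    positivity
  have hzero : (∫ t in Ioi 0, exp (-t ^ 2)) - gaussTailBound c 0 ≤ 0 := by
    have hgauss : ∫ t in Ioi 0, exp (-t ^ 2) = √π / 2 := by simpa using integral_gaussian_Ioi 1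
    have hbound : gaussTailBound c 0 = 1 / √c := by simp [gaussTailBound]
    rw [hgauss, hbound, sub_nonpos, le_div_iff₀ (sqrt_pos.2 hc)]
    calc √π / 2 * √c ≤ √π / 2 * (2 / √π) := by rw [← sqrt_four_div_pi]; gcongr
      _ = 1 := by field_simp
  have hφ : MonotoneOn (fun y ↦ y / √(y ^ 2 + c) + 1 - c) (Ici 0) :=
    ((monotoneOn_div_sqrt_sq_add hc).add_const 1).add_const (-c)
  have hlim : Tendsto (fun x ↦ (∫ t in Ioi x, exp (-t ^ 2)) - gaussTailBound c x) atTop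
      (𝓝 (0 - 0)) :=
    (tendsto_integral_Ioi_zero tendsto_id).sub (tendsto_gaussTailBound_atTop c)
  have key := nonpos_of_hasDerivAt_of_monotoneOn hderiv hpos hφ hzero hlim (sub_zero 0).le hx
  exact sub_nonpos.1 key

/-- `erfc x ≤ (2/√π) e^{-x²}/(x + √(x² + 4/π)) ≤ e^{-x²}` for all `x ≥ 0`. -/
theorem stmt4 (x : ℝ) (hx : 0 ≤ x) :
    erfc x ≤ (2 / Real.sqrt Real.pi) *
        (Real.exp (-x ^ 2) / (x + Real.sqrt (x ^ 2 + 4 / Real.pi))) ∧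
      (2 / Real.sqrt Real.pi) *
        (Real.exp (-x ^ 2) / (x + Real.sqrt (x ^ 2 + 4 / Real.pi))) ≤ Real.exp (-x ^ 2) := by
  have hc : (0 : ℝ) < 4 / π := by positivity
  have hconst : (0 : ℝ) ≤ 2 / √π := by positivity
  constructor
  · exact mul_le_mul_of_nonneg_left (integral_Ioi_exp_neg_sq_le_gaussTailBound hc le_rfl hx) hconst
  · calc 2 / √π * gaussTailBound (4 / π) x ≤ 2 / √π * (exp (-x ^ 2) / √(4 / π)) :=
          mul_le_mul_of_nonneg_left (gaussTailBound_le hc hx) hconst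
      _ = exp (-x ^ 2) := by
          rw [sqrt_four_div_pi]
          field_simp
end

section
/- Let T : Dom(T) ⊆ H → H be a densely defined closed operator on a Hilbert space H and let R_T := (I + T*T)^{-1}. Then the orthogonal projection onto the graph of T in H ⊕ H is given by the block operator matrix with entries P_{11} = R_T, P_{12} = T* R_{T*}, P_{21} = T R_T, P_{22} = I - R_{T*}. -/
open scoped InnerProductSpace

/-- Let `T` be a densely defined closed operator on a Hilbert space `H` and let
`R_T := (I + T*T)⁻¹` and `R_{T*} := (I + TT*)⁻¹` (encoded below by the hypotheses
`hRT` and `hRTs` stating that `RT` and `RTs` invert `I + T*T` and `I + TT*`).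
Then the orthogonal projection of `H ⊕ H` onto the graph of `T` is given by the
block operator matrix `P₁₁ = R_T`, `P₁₂ = T* R_{T*}`, `P₂₁ = T R_T`,
`P₂₂ = I - R_{T*}`: for every `(x, y) ∈ H ⊕ H` the vector
`(R_T x + T* R_{T*} y, T R_T x + (I - R_{T*}) y)` lies on the graph of `T` and its
difference from `(x, y)` is orthogonal to the graph. -/
theorem stmt7 {H : Type*} [NormedAddCommGroup H] [InnerProductSpace ℂ H] [CompleteSpace H]
    (T : H →ₗ.[ℂ] H)
    (hdense : Dense (T.domain : Set H))
    (hclosed : IsClosed (T.graph : Set (H × H)))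
    (RT RTs : H →L[ℂ] H)
    (hRTdom : ∀ x : H, RT x ∈ T.domain)
    (hTRTdom : ∀ x : H, T ⟨RT x, hRTdom x⟩ ∈ T.adjoint.domain)
    (hRT : ∀ x : H, T.adjoint ⟨T ⟨RT x, hRTdom x⟩, hTRTdom x⟩ + RT x = x)
    (hRTsdom : ∀ y : H, RTs y ∈ T.adjoint.domain)
    (hARTsdom : ∀ y : H, T.adjoint ⟨RTs y, hRTsdom y⟩ ∈ T.domain)
    (hRTs : ∀ y : H, T ⟨T.adjoint ⟨RTs y, hRTsdom y⟩, hARTsdom y⟩ + RTs y = y) :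
    ∀ x y : H,
      (RT x + T.adjoint ⟨RTs y, hRTsdom y⟩,
        T ⟨RT x, hRTdom x⟩ + (y - RTs y)) ∈ T.graph ∧
      ∀ w ∈ T.graph,
        ⟪x - (RT x + T.adjoint ⟨RTs y, hRTsdom y⟩), w.1⟫_ℂ +
          ⟪y - (T ⟨RT x, hRTdom x⟩ + (y - RTs y)), w.2⟫_ℂ = 0 := by
  intro x y
  have hadj := LinearPMap.adjoint_isFormalAdjoint hdense
  set u1 : T.domain := ⟨RT x, hRTdom x⟩
  set v1 : T.adjoint.domain := ⟨T u1, hTRTdom x⟩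
  set v2 : T.adjoint.domain := ⟨RTs y, hRTsdom y⟩
  set u2 : T.domain := ⟨T.adjoint v2, hARTsdom y⟩
  have hTu2 : T u2 = y - RTs y := eq_sub_of_add_eq (hRTs y)
  constructor
  · rw [LinearPMap.mem_graph_iff]
    refine ⟨u1 + u2, rfl, ?_⟩
    rw [T.map_add u1 u2, hTu2]
  · intro w hw
    rw [LinearPMap.mem_graph_iff] at hw
    obtain ⟨u, hu1, hu2⟩ := hw
    have h1 : x - (RT x + T.adjoint v2) = T.adjoint v1 - T.adjoint v2 := by
      have hx : T.adjoint v1 = x - RT x := eq_sub_of_add_eq (hRT x)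
      rw [hx]; abel
    have h2 : y - (T u1 + (y - RTs y)) = RTs y - T u1 := by abel
    rw [← hu1, ← hu2, h1, h2, inner_sub_left, inner_sub_left,
      hadj v1 u, hadj v2 u]
    ring
end

section
/- Let H be a Hilbert space with complete orthonormal system (e_j)_{j≥1}, let M be the (unbounded) self-adjoint multiplication operator M(Σ c_j e_j) = Σ j c_j e_j with domain {Σ c_j e_j : Σ j² |c_j|² < ∞}, let P_n be the orthogonal projection onto span(e_n), and set T_n := M - 2n P_n. Then ‖(T_n + i)^{-1} - (M + i)^{-1}‖ = 2n/(n² + 1), so T_n → M in the resolvent (gap) metric γ(A₁,A₂) = ‖(A₁+i)^{-1} - (A₂+i)^{-1}‖. -/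
/-! Both resolvents are diagonal in the basis and differ only at `e_n`, where
`(-n + i)⁻¹ - (n + i)⁻¹ = -2n / (n² + 1)`. Hence `(T_n + i)⁻¹ - (M + i)⁻¹` is this scalar times
the rank-one projection `P_n`, which has norm one. -/

open Filter Topology Complex InnerProductSpace

namespace HilbertBasis

variable {ι 𝕜 E F : Type*} [RCLike 𝕜] [NormedAddCommGroup E] [InnerProductSpace 𝕜 E]
  [TopologicalSpace F] [AddCommGroup F] [Module 𝕜 F] [T2Space F]

theorem continuousLinearMap_ext (b : HilbertBasis ι 𝕜 E) {f g : E →L[𝕜] F}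
    (h : ∀ i, f (b i) = g (b i)) : f = g :=
  ContinuousLinearMap.ext_on (Submodule.dense_iff_topologicalClosure_eq_top.mpr b.dense_span)
    (Set.forall_mem_range.mpr h)

theorem eq_smul_rankOne_of_apply [DecidableEq ι] (b : HilbertBasis ι 𝕜 E) {T : E →L[𝕜] E}
    {i : ι} {c : 𝕜} (h : ∀ j, T (b j) = (if j = i then c else 0) • b j) :
    T = c • rankOne 𝕜 (b i) (b i) :=
  b.continuousLinearMap_ext fun j => by
    rw [h, smul_apply, rankOne_apply, orthonormal_iff_ite.mp b.orthonormal]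
    by_cases hji : j = i
    · simp [hji]
    · simp [hji, Ne.symm hji]

end HilbertBasis

theorem Complex.norm_inv_neg_add_I_sub_inv_add_I (x : ℝ) :
    ‖(-x + I)⁻¹ - (x + I)⁻¹‖ = 2 * |x| / (x ^ 2 + 1) := by
  have hne : ∀ y : ℝ, (y : ℂ) + I ≠ 0 := fun y h => by simpa using congrArg im h
  have hsq : (-x + I) * (x + I) = -((x ^ 2 + 1 : ℝ) : ℂ) := by push_cast; linear_combination I_sq
  rw [inv_sub_inv (by simpa using hne (-x)) (hne x), hsq,
    show (x : ℂ) + I - (-x + I) = ((2 * x : ℝ) : ℂ) by push_cast; ring,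
    norm_div, norm_neg, norm_real, norm_real, Real.norm_eq_abs,
    Real.norm_of_nonneg (by positivity), abs_mul, abs_two]

theorem tendsto_two_mul_div_sq_add_one :
    Tendsto (fun n : ℕ => 2 * n / ((n : ℝ) ^ 2 + 1)) atTop (𝓝 0) := by
  refine squeeze_zero' (.of_forall fun n => by positivity) ?_
    (tendsto_const_div_atTop_nhds_zero_nat 2)
  filter_upwards [eventually_gt_atTop 0] with n hn
  have hn' : (0 : ℝ) < n := by exact_mod_cast hn
  rw [div_le_div_iff₀ (by positivity) hn']
  nlinarith

theorem stmt8_general {H : Type*} [NormedAddCommGroup H] [InnerProductSpace ℂ H]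
    (b : HilbertBasis {j : ℕ // 1 ≤ j} ℂ H)
    (RM : H →L[ℂ] H) (Rn : ℕ → H →L[ℂ] H)
    (hRM : ∀ j : {j : ℕ // 1 ≤ j}, RM (b j) = (((j : ℕ) : ℂ) + Complex.I)⁻¹ • b j)
    (hRn : ∀ (n : ℕ) (j : {j : ℕ // 1 ≤ j}), Rn n (b j) =
      (if (j : ℕ) = n then (-(n : ℂ) + Complex.I)⁻¹ else (((j : ℕ) : ℂ) + Complex.I)⁻¹) • b j) :
    (∀ n : ℕ, ‖Rn n - RM‖ = 2 * n / ((n : ℝ) ^ 2 + 1)) ∧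
      Filter.Tendsto (fun n : ℕ => ‖Rn n - RM‖) Filter.atTop (nhds 0) := by
  have hnorm : ∀ n : ℕ, ‖Rn n - RM‖ = 2 * n / ((n : ℝ) ^ 2 + 1) := by
    intro n
    rcases Nat.eq_zero_or_pos n with rfl | hn
    · have hRn0 : Rn 0 = RM := b.continuousLinearMap_ext fun j => by
        rw [hRn, hRM, if_neg (Nat.one_le_iff_ne_zero.mp j.2)]
      simp [hRn0]
    · let j₀ : {j : ℕ // 1 ≤ j} := ⟨n, hn⟩
      have hdiff : Rn n - RM =
          ((-(n : ℂ) + I)⁻¹ - ((n : ℂ) + I)⁻¹) • rankOne ℂ (b j₀) (b j₀) :=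
        b.eq_smul_rankOne_of_apply fun j => by
          rw [sub_apply, hRn, hRM, ← sub_smul]
          by_cases hj : j = j₀
          · subst hj; simp [j₀]
          · simp [hj, show (j : ℕ) ≠ n from fun h => hj (Subtype.ext h)]
      rw [hdiff, norm_smul, norm_rankOne, b.orthonormal.1 j₀, mul_one, mul_one,
        ← ofReal_natCast, norm_inv_neg_add_I_sub_inv_add_I, Nat.abs_cast]
  exact ⟨hnorm, by simpa only [hnorm] using tendsto_two_mul_div_sq_add_one⟩

/-- Let `H` be a Hilbert space with complete orthonormal system `(e_j)_{j ≥ 1}`, let `M`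
be the self-adjoint multiplication operator `M e_j = j e_j`, `P_n` the orthogonal
projection onto `span (e_n)`, and `T_n := M - 2n P_n`.  Then
`‖(T_n + i)⁻¹ - (M + i)⁻¹‖ = 2n/(n² + 1)`, so `T_n → M` in the resolvent (gap) metric
`γ(A₁, A₂) = ‖(A₁ + i)⁻¹ - (A₂ + i)⁻¹‖`.

The resolvents are encoded by bounded operators `RM = (M + i)⁻¹` and `Rn n = (T_n + i)⁻¹`,
characterized by their diagonal action on the Hilbert basis:
`(M + i)⁻¹ e_j = (j + i)⁻¹ e_j`, and `(T_n + i)⁻¹ e_j = (j + i)⁻¹ e_j` for `j ≠ n`,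
`(T_n + i)⁻¹ e_n = (-n + i)⁻¹ e_n`. -/
theorem stmt8 {H : Type*} [NormedAddCommGroup H] [InnerProductSpace ℂ H] [CompleteSpace H]
    (b : HilbertBasis {j : ℕ // 1 ≤ j} ℂ H)
    (RM : H →L[ℂ] H) (Rn : ℕ → H →L[ℂ] H)
    (hRM : ∀ j : {j : ℕ // 1 ≤ j}, RM (b j) = (((j : ℕ) : ℂ) + Complex.I)⁻¹ • b j)
    (hRn : ∀ (n : ℕ) (j : {j : ℕ // 1 ≤ j}), Rn n (b j) =
      (if (j : ℕ) = n then (-(n : ℂ) + Complex.I)⁻¹ else (((j : ℕ) : ℂ) + Complex.I)⁻¹) • b j) :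
    (∀ n : ℕ, ‖Rn n - RM‖ = 2 * n / ((n : ℝ) ^ 2 + 1)) ∧
      Filter.Tendsto (fun n : ℕ => ‖Rn n - RM‖) Filter.atTop (nhds 0) :=
  stmt8_general b RM Rn hRM hRn
end

section
/- With notation as above (T_n = M - 2nP_n, R(T) = T(I+T²)^{-1/2} the Riesz transform), one has ‖R(T_n) - R(M)‖ ≥ ‖R(T_n)e_n - R(M)e_n‖ = 2n/√(1+n²), which tends to 2 as n → ∞; hence (R(T_n)) is not a Cauchy sequence in operator norm even though T_n → M in the gap metric. -/
/-!
On `e_n` the operator `R(T_n)` acts by `-n/√(1+n²)`, while `R(M)` and `R(T_m)` for `m ≠ n` act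
by `+n/√(1+n²)`; so each of them is at operator distance at least `2n/√(1+n²) ≥ 1` from `R(T_n)`.
In particular consecutive terms of `(R(T_n))` stay at distance `≥ 1`.
-/

open Filter Topology

lemma not_cauchySeq_of_frequently_le_dist_succ {α : Type*} [PseudoMetricSpace α] {u : ℕ → α}
    {ε : ℝ} (hε : 0 < ε) (h : ∃ᶠ n in atTop, ε ≤ dist (u (n + 1)) (u n)) : ¬CauchySeq u := by
  intro hu
  obtain ⟨N, hN⟩ := Metric.cauchySeq_iff.1 hu ε hε
  obtain ⟨n, hNn, hn⟩ := frequently_atTop.1 h N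
  exact (hN (n + 1) (by omega) n hNn).not_ge hn

lemma norm_neg_smul_sub_smul {E : Type*} [NormedAddCommGroup E] [NormedSpace ℝ E]
    (a : ℝ) (x : E) : ‖(-a) • x - a • x‖ = 2 * |a| * ‖x‖ := by
  rw [← sub_smul, norm_smul, show -a - a = -(2 * a) by ring, norm_neg, norm_mul,
    Real.norm_two, Real.norm_eq_abs]

lemma tendsto_div_sqrt_one_add_sq_atTop :
    Tendsto (fun t : ℝ => t / √(1 + t ^ 2)) atTop (𝓝 1) := by
  have hinv : Tendsto (fun t : ℝ => (1 + t ^ 2)⁻¹) atTop (𝓝 0) :=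
    tendsto_inv_atTop_zero.comp
      (tendsto_atTop_add_const_left _ 1 (tendsto_pow_atTop two_ne_zero))
  have hsqrt : Tendsto (fun t : ℝ => √(1 - (1 + t ^ 2)⁻¹)) atTop (𝓝 1) := by
    simpa using (hinv.const_sub 1).sqrt
  refine hsqrt.congr' ?_
  filter_upwards [eventually_ge_atTop 0] with t ht
  rw [show 1 - (1 + t ^ 2)⁻¹ = t ^ 2 / (1 + t ^ 2) by field_simp; ring,
    Real.sqrt_div' _ (by positivity), Real.sqrt_sq ht]

lemma one_le_two_mul_div_sqrt_one_add_sq {t : ℝ} (ht : 1 ≤ t) : 1 ≤ 2 * t / √(1 + t ^ 2) := by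
  rw [le_div_iff₀ (by positivity), one_mul, Real.sqrt_le_iff]
  constructor <;> nlinarith

theorem stmt9_general {H : Type*} [NormedAddCommGroup H] [InnerProductSpace ℂ H]
    (b : HilbertBasis {j : ℕ // 1 ≤ j} ℂ H)
    (RM : H →L[ℂ] H) (Rn : ℕ → H →L[ℂ] H)
    (hRM : ∀ j : {j : ℕ // 1 ≤ j},
      RM (b j) = ((((j : ℕ) : ℝ)) / Real.sqrt (1 + ((j : ℕ) : ℝ) ^ 2)) • b j)
    (hRn : ∀ (n : ℕ) (j : {j : ℕ // 1 ≤ j}), Rn n (b j) =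
      (if (j : ℕ) = n then -((n : ℝ) / Real.sqrt (1 + (n : ℝ) ^ 2))
        else ((j : ℕ) : ℝ) / Real.sqrt (1 + ((j : ℕ) : ℝ) ^ 2)) • b j) :
    (∀ (n : ℕ) (hn : 1 ≤ n),
      ‖Rn n (b ⟨n, hn⟩) - RM (b ⟨n, hn⟩)‖ = 2 * n / Real.sqrt (1 + (n : ℝ) ^ 2) ∧
      ‖Rn n (b ⟨n, hn⟩) - RM (b ⟨n, hn⟩)‖ ≤ ‖Rn n - RM‖) ∧
    Filter.Tendsto (fun n : ℕ => 2 * (n : ℝ) / Real.sqrt (1 + (n : ℝ) ^ 2))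
      Filter.atTop (nhds 2) ∧
    ¬ CauchySeq Rn := by
  have hb (j) : ‖b j‖ = 1 := b.orthonormal.1 j
  have hflip (n : ℕ) (hn : 1 ≤ n) (A : H →L[ℂ] H)
      (hA : A (b ⟨n, hn⟩) = ((n : ℝ) / √(1 + (n : ℝ) ^ 2)) • b ⟨n, hn⟩) :
      ‖Rn n (b ⟨n, hn⟩) - A (b ⟨n, hn⟩)‖ = 2 * n / √(1 + (n : ℝ) ^ 2) := by
    rw [hRn, hA, if_pos rfl, norm_neg_smul_sub_smul, hb, abs_of_nonneg (by positivity)]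
    ring
  refine ⟨fun n hn => ⟨hflip n hn RM (hRM _), (Rn n - RM).unit_le_opNorm _ (hb _).le⟩,
    ?_, ?_⟩
  · simpa [mul_div_assoc] using
      (tendsto_div_sqrt_one_add_sq_atTop.comp tendsto_natCast_atTop_atTop).const_mul 2
  refine not_cauchySeq_of_frequently_le_dist_succ one_pos
    ((eventually_ge_atTop 1).mono fun n hn => ?_).frequently
  have hnext : Rn (n + 1) (b ⟨n, hn⟩) = ((n : ℝ) / √(1 + (n : ℝ) ^ 2)) • b ⟨n, hn⟩ := by
    rw [hRn, if_neg n.succ_ne_self.symm]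
  calc (1 : ℝ) ≤ 2 * n / √(1 + (n : ℝ) ^ 2) :=
        one_le_two_mul_div_sqrt_one_add_sq (by exact_mod_cast hn)
    _ = ‖(Rn n - Rn (n + 1)) (b ⟨n, hn⟩)‖ := (hflip n hn _ hnext).symm
    _ ≤ ‖Rn n - Rn (n + 1)‖ := (Rn n - Rn (n + 1)).unit_le_opNorm _ (hb _).le
    _ = dist (Rn (n + 1)) (Rn n) := by rw [dist_comm, dist_eq_norm]

/-- With `T_n = M - 2n P_n` and `R(T) = T (I + T²)^{-1/2}` the Riesz transform, one has
`‖R(T_n) - R(M)‖ ≥ ‖R(T_n) e_n - R(M) e_n‖ = 2n/√(1+n²) → 2` as `n → ∞`; hence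
`(R(T_n))` is not a Cauchy sequence in operator norm (even though `T_n → M` in the gap
metric).

The Riesz transforms are encoded by bounded operators `RM = R(M)` and `Rn n = R(T_n)`,
characterized by their diagonal action on the Hilbert basis: `R(M) e_j = (j/√(1+j²)) e_j`,
`R(T_n) e_n = (-n/√(1+n²)) e_n` and `R(T_n) e_j = (j/√(1+j²)) e_j` for `j ≠ n`. -/
theorem stmt9 {H : Type*} [NormedAddCommGroup H] [InnerProductSpace ℂ H] [CompleteSpace H]
    (b : HilbertBasis {j : ℕ // 1 ≤ j} ℂ H)
    (RM : H →L[ℂ] H) (Rn : ℕ → H →L[ℂ] H)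
    (hRM : ∀ j : {j : ℕ // 1 ≤ j},
      RM (b j) = ((((j : ℕ) : ℝ)) / Real.sqrt (1 + ((j : ℕ) : ℝ) ^ 2)) • b j)
    (hRn : ∀ (n : ℕ) (j : {j : ℕ // 1 ≤ j}), Rn n (b j) =
      (if (j : ℕ) = n then -((n : ℝ) / Real.sqrt (1 + (n : ℝ) ^ 2))
        else ((j : ℕ) : ℝ) / Real.sqrt (1 + ((j : ℕ) : ℝ) ^ 2)) • b j) :
    (∀ (n : ℕ) (hn : 1 ≤ n),
      ‖Rn n (b ⟨n, hn⟩) - RM (b ⟨n, hn⟩)‖ = 2 * n / Real.sqrt (1 + (n : ℝ) ^ 2) ∧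
      ‖Rn n (b ⟨n, hn⟩) - RM (b ⟨n, hn⟩)‖ ≤ ‖Rn n - RM‖) ∧
    Filter.Tendsto (fun n : ℕ => 2 * (n : ℝ) / Real.sqrt (1 + (n : ℝ) ^ 2))
      Filter.atTop (nhds 2) ∧
    ¬ CauchySeq Rn :=
  stmt9_general b RM Rn hRM hRn
end
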